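/- Let $(B_0,B_1)$ be a Banach couple satisfying Persson's condition (H), let $K\subset B_0$ be compact with associated constant $c(K)$, and let $P_\varepsilon$ be the operator provided by (H) for $\varepsilon>0$. Let $T:A_1\to B_1$ be as in Theorem 1 (with constants $C_0,C_1$, and $A_0\subset A_1$) and satisfy $Ta\in\|a\|_{A_0}K$ for each $a\in A_0$. Then the map $P_\varepsilon T-T$ satisfies the hypotheses of Theorem 1 with constants $\varepsilon$ and $C_1(c(K)+1)$, and consequently $\|(P_\varepsilon T-T)a\|_{(B_0,B_1)_{\theta,p}}\le\varepsilon^{1-\theta}\big(C_1(c(K)+1)\big)^{\theta}\|a\|_{(A_0,A_1)_{\theta,p}}$ for all $a\in(A_0,A_1)_{\theta,p}$, $\theta\in(0,1)$, $p\in[1,\infty]$. -/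

import Mathlib

/-! The map `S := P_ε T - T` is `ε`-bounded on `A₀` because `T` sends `a` into `‖a‖_{A₀} K`
and `P_ε` moves points of `K` by less than `ε` in `B₀`; it is `C₁(c+1)`-Lipschitz into `B₁`
because `S a - S a' = (P_ε - 1)(T a - T a')` with `‖P_ε - 1‖_{B₁ → B₁} ≤ c + 1`.
Theorem 1 then follows from the K-functional estimate `K(t, S a; B) ≤ D₀ K((D₁/D₀) t, a; A)`,
obtained by splitting `S a = S y + (S a - S y)` along any decomposition `a = y + (a - y)`,
together with the invariance of `dt/t` under dilations. -/

open scoped ENNReal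
open Filter Topology MeasureTheory

/-- A member of a Banach couple, modeled as an extended-real-valued norm on a common
ambient real vector space `X`; the space itself is `{x | N x < ∞}`.  The `complete`
field expresses that this space is a Banach space. -/
structure CoupleNorm (X : Type*) [AddCommGroup X] [Module ℝ X] where
  N : X → ℝ≥0∞
  zero : N 0 = 0
  add_le : ∀ x y, N (x + y) ≤ N x + N y
  smul_eq : ∀ (c : ℝ) (x : X), N (c • x) = ENNReal.ofReal |c| * N x
  definite : ∀ x, N x = 0 → x = 0
  complete : ∀ u : ℕ → X, (∀ n, N (u n) < ∞) →
    (∀ ε : ℝ≥0∞, 0 < ε → ∃ n0, ∀ m n, n0 ≤ m → n0 ≤ n → N (u m - u n) < ε) →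
    ∃ x, Tendsto (fun n => N (u n - x)) atTop (𝓝 0)

namespace CoupleNorm

variable {X : Type*} [AddCommGroup X] [Module ℝ X]

/-- The Peetre K-functional of the couple `(N0, N1)`. -/
noncomputable def Kfun (N0 N1 : CoupleNorm X) (t : ℝ) (x : X) : ℝ≥0∞ :=
  ⨅ y : X, N0.N y + ENNReal.ofReal t * N1.N (x - y)

/-- The measure dt/t on (0,∞). -/
noncomputable def haarMeas : Measure ℝ :=
  (volume.restrict (Set.Ioi (0 : ℝ))).withDensity fun t => ENNReal.ofReal t⁻¹

/-- The real interpolation norm `(θ, p)`, for `p ∈ [1,∞]`, as an extended real. -/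
noncomputable def interpNorm (N0 N1 : CoupleNorm X) (θ : ℝ) (p : ℝ≥0∞) (x : X) : ℝ≥0∞ :=
  if p = ∞ then ⨆ t : {t : ℝ // 0 < t}, (ENNReal.ofReal t.1) ^ (-θ) * Kfun N0 N1 t.1 x
  else (∫⁻ t, ((ENNReal.ofReal t) ^ (-θ) * Kfun N0 N1 t x) ^ p.toReal ∂haarMeas) ^ (1 / p.toReal)

/-- `N0 ⊂ N1`: continuous embedding (the inclusion of domains is then automatic). -/
def Embeds (N0 N1 : CoupleNorm X) : Prop :=
  ∃ c : ℝ, 0 < c ∧ ∀ x, N1.N x ≤ ENNReal.ofReal c * N0.N x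

/-- A set bounded with respect to a generalized norm. -/
def BddWith (NN : X → ℝ≥0∞) (S : Set X) : Prop :=
  ∃ R : ℝ, ∀ x ∈ S, NN x ≤ ENNReal.ofReal R

/-- Sequential relative compactness with respect to a generalized norm. -/
def RelCompactWith (NN : X → ℝ≥0∞) (S : Set X) : Prop :=
  ∀ u : ℕ → X, (∀ n, u n ∈ S) →
    ∃ (σ : ℕ → ℕ) (x : X), StrictMono σ ∧
      Tendsto (fun n => NN (u (σ n) - x)) atTop (𝓝 0)

/-- Sequential compactness (with limits inside the set) w.r.t. a generalized norm. -/
def CompactWith (NN : X → ℝ≥0∞) (S : Set X) : Prop :=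
  ∀ u : ℕ → X, (∀ n, u n ∈ S) →
    ∃ x ∈ S, ∃ σ : ℕ → ℕ, StrictMono σ ∧
      Tendsto (fun n => NN (u (σ n) - x)) atTop (𝓝 0)

end CoupleNorm

namespace CoupleNorm

variable {X Y : Type*} [AddCommGroup X] [Module ℝ X] [AddCommGroup Y] [Module ℝ Y]

lemma N_neg (B : CoupleNorm X) (x : X) : B.N (-x) = B.N x := by
  simpa using B.smul_eq (-1) x

lemma N_sub_le (B : CoupleNorm X) (x y : X) : B.N (x - y) ≤ B.N x + B.N y := by
  simpa only [sub_eq_add_neg, N_neg] using B.add_le x (-y)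

lemma Kfun_mono (N0 N1 : CoupleNorm X) (x : X) : Monotone fun t => Kfun N0 N1 t x :=
  fun _ _ hst => iInf_mono fun _ => by gcongr

lemma lintegral_comp_mul_left {f : ℝ → ℝ≥0∞} (hf : Measurable f) {l : ℝ} (hl : l ≠ 0) :
    ∫⁻ t, f (l * t) = ENNReal.ofReal |l⁻¹| * ∫⁻ t, f t := by
  rw [← lintegral_map hf (measurable_const_mul l), Real.map_volume_mul_left hl,
    lintegral_smul_measure, smul_eq_mul]

lemma ae_pos_haarMeas : ∀ᵐ t ∂haarMeas, (0 : ℝ) < t :=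
  (withDensity_absolutelyContinuous _ _).ae_le (ae_restrict_mem measurableSet_Ioi)

lemma lintegral_haarMeas {g : ℝ → ℝ≥0∞} (hg : Measurable g) :
    ∫⁻ t, g t ∂haarMeas = ∫⁻ t, (Set.Ioi 0).indicator (fun t => ENNReal.ofReal t⁻¹ * g t) t := by
  rw [haarMeas, lintegral_withDensity_eq_lintegral_mul _
    (by fun_prop : Measurable fun t : ℝ => ENNReal.ofReal t⁻¹) hg,
    lintegral_indicator measurableSet_Ioi]
  rfl

lemma lintegral_haarMeas_comp_mul_left {g : ℝ → ℝ≥0∞} (hg : Measurable g) {l : ℝ} (hl : 0 < l) :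
    ∫⁻ t, g (l * t) ∂haarMeas = ∫⁻ t, g t ∂haarMeas := by
  set φ := (Set.Ioi (0 : ℝ)).indicator fun t => ENNReal.ofReal t⁻¹ * g t
  have hφ : Measurable φ :=
    (by fun_prop : Measurable fun t : ℝ => ENNReal.ofReal t⁻¹ * g t).indicator measurableSet_Ioi
  have hgl : Measurable fun t => g (l * t) := hg.comp (measurable_const_mul l)
  rw [lintegral_haarMeas hgl, lintegral_haarMeas hg]
  calc ∫⁻ t, (Set.Ioi 0).indicator (fun t => ENNReal.ofReal t⁻¹ * g (l * t)) t
      = ∫⁻ t, ENNReal.ofReal l * φ (l * t) := by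
        refine lintegral_congr fun t => ?_
        by_cases ht : 0 < t
        · have hlt : 0 < l * t := mul_pos hl ht
          simp only [φ, Set.indicator_of_mem (Set.mem_Ioi.2 ht), Set.indicator_of_mem
            (Set.mem_Ioi.2 hlt), ← mul_assoc, ← ENNReal.ofReal_mul hl.le]
          field_simp
        · have hlt : ¬ 0 < l * t := fun h => ht (pos_of_mul_pos_right h hl.le)
          simp [φ, ht, hlt]
    _ = ENNReal.ofReal l * (ENNReal.ofReal |l⁻¹| * ∫⁻ t, φ t) := by
        rw [lintegral_const_mul _ (show Measurable fun t => φ (l * t) from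
            hφ.comp (measurable_const_mul l)),
          lintegral_comp_mul_left hφ hl.ne']
    _ = ∫⁻ t, φ t := by
        rw [abs_of_pos (inv_pos.2 hl), ← mul_assoc, ← ENNReal.ofReal_mul hl.le,
          mul_inv_cancel₀ hl.ne', ENNReal.ofReal_one, one_mul]

variable {A0 A1 : CoupleNorm X} {B0 B1 : CoupleNorm Y}

lemma Kfun_le_of_lipschitz {S : X → Y} {D0 D1 : ℝ} (hD0 : 0 < D0) (hD1 : 0 < D1)
    (hS0 : ∀ a : X, B0.N (S a) ≤ ENNReal.ofReal D0 * A0.N a)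
    (hS1 : ∀ a a' : X, A1.N a < ∞ → A1.N a' < ∞ →
      B1.N (S a - S a') ≤ ENNReal.ofReal D1 * A1.N (a - a'))
    {a : X} (ha : A1.N a < ∞) {t : ℝ} (ht : 0 < t) :
    Kfun B0 B1 t (S a) ≤ ENNReal.ofReal D0 * Kfun A0 A1 (D1 / D0 * t) a := by
  rw [Kfun, Kfun, ENNReal.mul_iInf_of_ne (by simpa using hD0) ENNReal.ofReal_ne_top]
  refine le_iInf fun y => ?_
  by_cases hy : A1.N y < ∞
  · calc ⨅ z, B0.N z + ENNReal.ofReal t * B1.N (S a - z)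
        ≤ B0.N (S y) + ENNReal.ofReal t * B1.N (S a - S y) := iInf_le _ (S y)
      _ ≤ ENNReal.ofReal D0 * A0.N y + ENNReal.ofReal t * (ENNReal.ofReal D1 * A1.N (a - y)) := by
          gcongr
          exacts [hS0 y, hS1 a y ha hy]
      _ = ENNReal.ofReal D0 * (A0.N y + ENNReal.ofReal (D1 / D0 * t) * A1.N (a - y)) := by
          rw [mul_add, ← mul_assoc, ← mul_assoc, ← ENNReal.ofReal_mul ht.le,
            ← ENNReal.ofReal_mul hD0.le]
          field_simp
  · have hay : A1.N (a - y) = ∞ := by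
      by_contra hay
      have := A1.N_sub_le a (a - y)
      rw [sub_sub_cancel] at this
      exact hy (this.trans_lt (ENNReal.add_lt_top.2 ⟨ha, lt_top_iff_ne_top.2 hay⟩))
    have hlt : ENNReal.ofReal (D1 / D0 * t) ≠ 0 := by
      simpa using mul_pos (div_pos hD1 hD0) ht
    rw [hay, ENNReal.mul_top hlt, add_top, ENNReal.mul_top (by simpa using hD0)]
    exact le_top

lemma interpNorm_le_of_Kfun_le {a : X} {b : Y} {D : ℝ≥0∞} {l : ℝ} (hl : 0 < l)
    (hK : ∀ t : ℝ, 0 < t → Kfun B0 B1 t b ≤ D * Kfun A0 A1 (l * t) a)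
    (θ : ℝ) {p : ℝ≥0∞} (hp : p ≠ 0) :
    interpNorm B0 B1 θ p b ≤ D * ENNReal.ofReal l ^ θ * interpNorm A0 A1 θ p a := by
  set C := D * ENNReal.ofReal l ^ θ
  have hweight : ∀ t : ℝ, 0 < t → ENNReal.ofReal t ^ (-θ) * Kfun B0 B1 t b ≤
      C * (ENNReal.ofReal (l * t) ^ (-θ) * Kfun A0 A1 (l * t) a) := by
    intro t ht
    have hsplit :
        ENNReal.ofReal t ^ (-θ) = ENNReal.ofReal l ^ θ * ENNReal.ofReal (l * t) ^ (-θ) := by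
      rw [ENNReal.ofReal_mul hl.le, ENNReal.mul_rpow_of_ne_top ENNReal.ofReal_ne_top
        ENNReal.ofReal_ne_top, ← mul_assoc, ← ENNReal.rpow_add _ _ (by simpa using hl)
        ENNReal.ofReal_ne_top, add_neg_cancel, ENNReal.rpow_zero, one_mul]
    calc ENNReal.ofReal t ^ (-θ) * Kfun B0 B1 t b
        ≤ ENNReal.ofReal t ^ (-θ) * (D * Kfun A0 A1 (l * t) a) := by gcongr; exact hK t ht
      _ = C * (ENNReal.ofReal (l * t) ^ (-θ) * Kfun A0 A1 (l * t) a) := by rw [hsplit]; ring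
  unfold interpNorm
  split_ifs with hpinf
  · refine iSup_le fun t => (hweight t t.2).trans ?_
    gcongr
    exact le_iSup_of_le (⟨l * t, mul_pos hl t.2⟩ : {t : ℝ // 0 < t}) le_rfl
  · set q := p.toReal
    have hq : 0 < q := ENNReal.toReal_pos hp hpinf
    set G : ℝ → ℝ≥0∞ := fun s => (ENNReal.ofReal s ^ (-θ) * Kfun A0 A1 s a) ^ q
    have hG : Measurable G := by
      have := (Kfun_mono A0 A1 a).measurable
      fun_prop
    calc (∫⁻ t, (ENNReal.ofReal t ^ (-θ) * Kfun B0 B1 t b) ^ q ∂haarMeas) ^ (1 / q)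
        ≤ (∫⁻ t, C ^ q * G (l * t) ∂haarMeas) ^ (1 / q) := by
          gcongr ?_ ^ _
          refine lintegral_mono_ae (ae_pos_haarMeas.mono fun t ht => ?_)
          rw [← ENNReal.mul_rpow_of_nonneg _ _ hq.le]
          exact ENNReal.rpow_le_rpow (hweight t ht) hq.le
      _ = C * (∫⁻ s, G s ∂haarMeas) ^ (1 / q) := by
          rw [lintegral_const_mul _ (show Measurable fun t => G (l * t) from
              hG.comp (measurable_const_mul l)),
            lintegral_haarMeas_comp_mul_left hG hl, ENNReal.mul_rpow_of_nonneg _ _ (by positivity),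
            ← ENNReal.rpow_mul, mul_one_div_cancel hq.ne', ENNReal.rpow_one]

theorem interpNorm_le_of_lipschitz {S : X → Y} {D0 D1 : ℝ} (hD0 : 0 < D0) (hD1 : 0 < D1)
    (hS0 : ∀ a : X, B0.N (S a) ≤ ENNReal.ofReal D0 * A0.N a)
    (hS1 : ∀ a a' : X, A1.N a < ∞ → A1.N a' < ∞ →
      B1.N (S a - S a') ≤ ENNReal.ofReal D1 * A1.N (a - a'))
    (θ : ℝ) {p : ℝ≥0∞} (hp : p ≠ 0) {a : X} (ha : A1.N a < ∞) :
    interpNorm B0 B1 θ p (S a) ≤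
      ENNReal.ofReal (D0 ^ (1 - θ) * D1 ^ θ) * interpNorm A0 A1 θ p a := by
  have hconst : D0 * (D1 / D0) ^ θ = D0 ^ (1 - θ) * D1 ^ θ := by
    rw [Real.div_rpow hD1.le hD0.le, Real.rpow_sub hD0, Real.rpow_one]
    field_simp
  calc interpNorm B0 B1 θ p (S a)
      ≤ ENNReal.ofReal D0 * ENNReal.ofReal (D1 / D0) ^ θ * interpNorm A0 A1 θ p a :=
        interpNorm_le_of_Kfun_le (div_pos hD1 hD0)
          (fun _ ht => Kfun_le_of_lipschitz hD0 hD1 hS0 hS1 ha ht) θ hp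
    _ = ENNReal.ofReal (D0 ^ (1 - θ) * D1 ^ θ) * interpNorm A0 A1 θ p a := by
        rw [ENNReal.ofReal_rpow_of_pos (div_pos hD1 hD0), ← ENNReal.ofReal_mul hD0.le, hconst]

lemma N_map_sub_self_le {B : CoupleNorm Y} {P : Y →ₗ[ℝ] Y} {c : ℝ} (hc : 0 ≤ c)
    (hP : ∀ b : Y, B.N (P b) ≤ ENNReal.ofReal c * B.N b) (b : Y) :
    B.N (P b - b) ≤ ENNReal.ofReal (c + 1) * B.N b := by
  calc B.N (P b - b) ≤ B.N (P b) + B.N b := B.N_sub_le _ _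
    _ ≤ ENNReal.ofReal c * B.N b + B.N b := by gcongr; exact hP b
    _ = ENNReal.ofReal (c + 1) * B.N b := by
        rw [ENNReal.ofReal_add hc zero_le_one, ENNReal.ofReal_one, add_mul, one_mul]

lemma N_map_comp_sub_le_of_approx {A : CoupleNorm X} {B : CoupleNorm Y} {T : X → Y}
    {P : Y →ₗ[ℝ] Y} {K : Set Y} {ε : ℝ} (hε : 0 < ε)
    (hTK : ∀ a : X, A.N a < ∞ → ∃ k ∈ K, T a = (A.N a).toReal • k)
    (hPapp : ∀ b ∈ K, B.N (P b - b) ≤ ENNReal.ofReal ε) (a : X) :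
    B.N (P (T a) - T a) ≤ ENNReal.ofReal ε * A.N a := by
  by_cases ha : A.N a < ∞
  · obtain ⟨k, hk, hTa⟩ := hTK a ha
    rw [hTa, map_smul, ← smul_sub, B.smul_eq, abs_of_nonneg ENNReal.toReal_nonneg,
      ENNReal.ofReal_toReal ha.ne, mul_comm]
    gcongr
    exact hPapp k hk
  · rw [not_lt_top_iff.1 ha, ENNReal.mul_top (by simpa using hε)]
    exact le_top

end CoupleNorm

theorem stmt11_general {X Y : Type*} [AddCommGroup X] [Module ℝ X] [AddCommGroup Y] [Module ℝ Y]
    (A0 A1 : CoupleNorm X) (B0 B1 : CoupleNorm Y)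
    (T : X → Y) (C1 : ℝ) (hC1 : 0 < C1)
    (hT1 : ∀ a a' : X, A1.N a < ∞ → A1.N a' < ∞ →
      B1.N (T a - T a') ≤ ENNReal.ofReal C1 * A1.N (a - a'))
    (K : Set Y)
    (hTK : ∀ a : X, A0.N a < ∞ → ∃ k ∈ K, T a = (A0.N a).toReal • k)
    (c ε : ℝ) (hc : 0 < c) (hε : 0 < ε) (P : Y →ₗ[ℝ] Y)
    (hP1 : ∀ b : Y, B1.N (P b) ≤ ENNReal.ofReal c * B1.N b)
    (hPapp : ∀ b ∈ K, B0.N (P b - b) < ENNReal.ofReal ε) :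
    (∀ a : X, B0.N (P (T a) - T a) ≤ ENNReal.ofReal ε * A0.N a) ∧
    (∀ a a' : X, A1.N a < ∞ → A1.N a' < ∞ →
      B1.N ((P (T a) - T a) - (P (T a') - T a')) ≤
        ENNReal.ofReal (C1 * (c + 1)) * A1.N (a - a')) ∧
    (∀ θ : ℝ, 0 < θ → θ < 1 → ∀ p : ℝ≥0∞, 1 ≤ p → ∀ a : X, A1.N a < ∞ →
      CoupleNorm.interpNorm B0 B1 θ p (P (T a) - T a) ≤
        ENNReal.ofReal (ε ^ (1 - θ) * (C1 * (c + 1)) ^ θ) *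
          CoupleNorm.interpNorm A0 A1 θ p a) := by
  have h0 := CoupleNorm.N_map_comp_sub_le_of_approx hε hTK fun b hb => (hPapp b hb).le
  have h1 : ∀ a a' : X, A1.N a < ∞ → A1.N a' < ∞ →
      B1.N ((P (T a) - T a) - (P (T a') - T a')) ≤
        ENNReal.ofReal (C1 * (c + 1)) * A1.N (a - a') := by
    intro a a' ha ha'
    calc B1.N ((P (T a) - T a) - (P (T a') - T a'))
        = B1.N (P (T a - T a') - (T a - T a')) := by rw [map_sub, sub_sub_sub_comm]
      _ ≤ ENNReal.ofReal (c + 1) * B1.N (T a - T a') := CoupleNorm.N_map_sub_self_le hc.le hP1 _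
      _ ≤ ENNReal.ofReal (c + 1) * (ENNReal.ofReal C1 * A1.N (a - a')) := by
          gcongr; exact hT1 a a' ha ha'
      _ = ENNReal.ofReal (C1 * (c + 1)) * A1.N (a - a') := by
          rw [ENNReal.ofReal_mul hC1.le]; ring
  exact ⟨h0, h1, fun θ _ _ p hp a ha =>
    CoupleNorm.interpNorm_le_of_lipschitz hε (by positivity) h0 h1 θ
      (zero_lt_one.trans_le hp).ne' ha⟩

/-- `P_ε T - T` satisfies the Theorem 1 hypotheses with constants
`ε` and `C1 (c(K)+1)`, and the resulting interpolation estimate. -/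
theorem stmt11 {X Y : Type*} [AddCommGroup X] [Module ℝ X] [AddCommGroup Y] [Module ℝ Y]
    (A0 A1 : CoupleNorm X) (B0 B1 : CoupleNorm Y)
    (hA : CoupleNorm.Embeds A0 A1)
    (T : X → Y) (C0 C1 : ℝ) (hC0 : 0 < C0) (hC1 : 0 < C1)
    (hT0 : ∀ a : X, B0.N (T a) ≤ ENNReal.ofReal C0 * A0.N a)
    (hT1 : ∀ a a' : X, A1.N a < ∞ → A1.N a' < ∞ →
      B1.N (T a - T a') ≤ ENNReal.ofReal C1 * A1.N (a - a'))
    (K : Set Y) (hKsub : K ⊆ {b | B0.N b < ∞}) (hKcpt : CoupleNorm.CompactWith B0.N K)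
    (hTK : ∀ a : X, A0.N a < ∞ → ∃ k ∈ K, T a = (A0.N a).toReal • k)
    (c ε : ℝ) (hc : 0 < c) (hε : 0 < ε) (P : Y →ₗ[ℝ] Y)
    (hPmem : ∀ b : Y, (B0.N b < ∞ ∨ B1.N b < ∞) → B0.N (P b) < ∞ ∧ B1.N (P b) < ∞)
    (hP0 : ∀ b : Y, B0.N (P b) ≤ ENNReal.ofReal c * B0.N b)
    (hP1 : ∀ b : Y, B1.N (P b) ≤ ENNReal.ofReal c * B1.N b)
    (hPapp : ∀ b ∈ K, B0.N (P b - b) < ENNReal.ofReal ε) :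
    (∀ a : X, B0.N (P (T a) - T a) ≤ ENNReal.ofReal ε * A0.N a) ∧
    (∀ a a' : X, A1.N a < ∞ → A1.N a' < ∞ →
      B1.N ((P (T a) - T a) - (P (T a') - T a')) ≤
        ENNReal.ofReal (C1 * (c + 1)) * A1.N (a - a')) ∧
    (∀ θ : ℝ, 0 < θ → θ < 1 → ∀ p : ℝ≥0∞, 1 ≤ p → ∀ a : X, A1.N a < ∞ →
      CoupleNorm.interpNorm B0 B1 θ p (P (T a) - T a) ≤
        ENNReal.ofReal (ε ^ (1 - θ) * (C1 * (c + 1)) ^ θ) *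
          CoupleNorm.interpNorm A0 A1 θ p a) :=
  stmt11_general A0 A1 B0 B1 T C1 hC1 hT1 K hTK c ε hc hε P hP1 hPapp
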